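/- arXiv:1706.03045 — 2 statements merged into one kernel-verified Lean document; each statement's English description precedes it below -/
import Mathlib

section
/- There exists a constant c > 0, depending only on the dimension n, such that for all f ∈ L¹(Q₀) one has f**(t) − f*(t) ≤ c (f^#_{Q₀})*(t) for all 0 < t < 1/6. -/
open MeasureTheory ENNReal NNReal Set Filter

noncomputable section

/-- An axis-parallel cube in `ℝⁿ` (modeled as `Fin n → ℝ`), given by its lower-left
corner and (positive) side length. -/
structure Cube (n : ℕ) where
  corner : Fin n → ℝ
  side : ℝ
  side_pos : 0 < side

namespace Cube

/-- The underlying set of a cube. -/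
def set {n : ℕ} (Q : Cube n) : Set (Fin n → ℝ) :=
  Set.Icc Q.corner fun i => Q.corner i + Q.side

/-- The volume `|Q|` of a cube, as an extended nonnegative real. -/
def vol {n : ℕ} (Q : Cube n) : ℝ≥0∞ :=
  volume Q.set

end Cube

variable {n : ℕ}

/-- The mean value `f_Q = (1/|Q|) ∫_Q f`. -/
def cubeAvg (f : (Fin n → ℝ) → ℝ) (Q : Cube n) : ℝ :=
  (∫ x in Q.set, f x) / (volume Q.set).toReal

/-- `(1/|Q|) ∫_Q ∫_Q |f x - f y| dx dy`, as an extended nonnegative real. -/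
def dblOsc (f : (Fin n → ℝ) → ℝ) (Q : Cube n) : ℝ≥0∞ :=
  (∫⁻ x in Q.set, ∫⁻ y in Q.set, ENNReal.ofReal |f x - f y|) / Q.vol

/-- `(1/|Q|) ∫_Q |f - f_Q|`, as an extended nonnegative real. -/
def oscAvg (f : (Fin n → ℝ) → ℝ) (Q : Cube n) : ℝ≥0∞ :=
  (∫⁻ x in Q.set, ENNReal.ofReal |f x - cubeAvg f Q|) / Q.vol

/-- A packing of `Q₀`: a countable family of subcubes of `Q₀` with pairwise
disjoint interiors. -/
def IsPacking (Q₀ : Cube n) (π : Set (Cube n)) : Prop :=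
  π.Countable ∧ (∀ Q ∈ π, Q.set ⊆ Q₀.set) ∧
    π.Pairwise fun Q Q' => Disjoint (interior Q.set) (interior Q'.set)

/-- `γ ∈ Γ_f`: `γ` is integrable on `Q₀` and for every packing `{Qᵢ}` of `Q₀`,
`Σᵢ (1/|Qᵢ|) ∫_{Qᵢ}∫_{Qᵢ} |f x - f y| ≤ Σᵢ ∫_{Qᵢ} γ`. -/
def MemGamma (Q₀ : Cube n) (f γ : (Fin n → ℝ) → ℝ) : Prop :=
  IntegrableOn γ Q₀.set volume ∧
    ∀ π : Set (Cube n), IsPacking Q₀ π →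
      ∑' Q : π, dblOsc f (Q : Cube n) ≤
        ∑' Q : π, ENNReal.ofReal (∫ x in (Q : Cube n).set, γ x)

/-- The subcubes of `Q₀` containing the point `x`. -/
def subcubesAt (Q₀ : Cube n) (x : Fin n → ℝ) : Set (Cube n) :=
  {Q | Q.set ⊆ Q₀.set ∧ x ∈ Q.set}

/-- The sharp maximal function `f^#_{Q₀}(x) = sup_{Q₀ ⊇ Q ∋ x} (1/|Q|) ∫_Q |f - f_Q|`. -/
def sharpMax (Q₀ : Cube n) (f : (Fin n → ℝ) → ℝ) (x : Fin n → ℝ) : ℝ≥0∞ :=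
  ⨆ Q ∈ subcubesAt Q₀ x, oscAvg f Q

/-- Hardy–Littlewood maximal function of an `ℝ≥0∞`-valued function. -/
def hlMaxE (Q₀ : Cube n) (g : (Fin n → ℝ) → ℝ≥0∞) (x : Fin n → ℝ) : ℝ≥0∞ :=
  ⨆ Q ∈ subcubesAt Q₀ x, (∫⁻ y in Q.set, g y) / Q.vol

/-- Hardy–Littlewood maximal function `M_{Q₀} g (x) = sup_{Q₀ ⊇ Q ∋ x} (1/|Q|) ∫_Q |g|`. -/
def hlMax (Q₀ : Cube n) (g : (Fin n → ℝ) → ℝ) (x : Fin n → ℝ) : ℝ≥0∞ :=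
  hlMaxE Q₀ (fun y => ENNReal.ofReal |g y|) x

/-- `inf_{c ∈ ℝ} inf {α ≥ 0 : |{y ∈ Q : |f y - c| > α}| < s |Q|}`. -/
def oscS (s : ℝ) (f : (Fin n → ℝ) → ℝ) (Q : Cube n) : ℝ≥0∞ :=
  ⨅ c : ℝ,
    sInf {a : ℝ≥0∞ | volume {y ∈ Q.set | a < ENNReal.ofReal |f y - c|} < ENNReal.ofReal s * Q.vol}

/-- The Strömberg–Jawerth–Torchinsky local maximal function `M^#_{s,Q₀} f`. -/
def locSharpMax (s : ℝ) (Q₀ : Cube n) (f : (Fin n → ℝ) → ℝ) (x : Fin n → ℝ) : ℝ≥0∞ :=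
  ⨆ Q ∈ subcubesAt Q₀ x, oscS s f Q

/-- The decreasing rearrangement (on `(0,1)`, extended-real-valued) of an
`ℝ≥0∞`-valued function on `Q₀`. -/
def rearr (Q₀ : Cube n) (g : (Fin n → ℝ) → ℝ≥0∞) (t : ℝ) : ℝ≥0∞ :=
  sInf {a : ℝ≥0∞ | volume {x ∈ Q₀.set | a < g x} ≤ ENNReal.ofReal t}

/-- The decreasing rearrangement `f*` of a real function on `Q₀`. -/
def rearrF (Q₀ : Cube n) (f : (Fin n → ℝ) → ℝ) : ℝ → ℝ≥0∞ :=
  rearr Q₀ fun x => ENNReal.ofReal |f x|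

/-- A rearrangement invariant (Banach function) space, described through its
representation space on `(0,1)`: an extended-real-valued function norm `N` on
(`ℝ≥0∞`-valued) functions on `(0,1)` which is rearrangement invariant, has the
Fatou property, contains `L^∞(0,1)` and embeds into `L¹(0,1)`. -/
structure RISpace where
  N : (ℝ → ℝ≥0∞) → ℝ≥0∞
  add_le : ∀ f g : ℝ → ℝ≥0∞, Measurable f → Measurable g → N (f + g) ≤ N f + N g
  smul_eq : ∀ (c : ℝ≥0) (f : ℝ → ℝ≥0∞), N (fun t => (c : ℝ≥0∞) * f t) = (c : ℝ≥0∞) * N f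
  mono : ∀ f g : ℝ → ℝ≥0∞, (∀ᵐ t ∂volume.restrict (Set.Ioo (0:ℝ) 1), f t ≤ g t) → N f ≤ N g
  rearr_inv : ∀ f g : ℝ → ℝ≥0∞, Measurable f → Measurable g →
    (∀ a : ℝ≥0∞, volume {t ∈ Set.Ioo (0:ℝ) 1 | a < f t} = volume {t ∈ Set.Ioo (0:ℝ) 1 | a < g t}) →
    N f = N g
  eq_zero_iff : ∀ f : ℝ → ℝ≥0∞, Measurable f →
    (N f = 0 ↔ f =ᵐ[volume.restrict (Set.Ioo (0:ℝ) 1)] 0)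
  fatou : ∀ f : ℕ → ℝ → ℝ≥0∞, (∀ k, Measurable (f k)) → Monotone f →
    N (fun t => ⨆ k, f k t) = ⨆ k, N (f k)
  indicator_lt_top : N ((Set.Ioo (0:ℝ) 1).indicator fun _ => 1) < ⊤
  le_L1 : ∃ C : ℝ≥0∞, C ≠ ⊤ ∧ ∀ f : ℝ → ℝ≥0∞, Measurable f →
    (∫⁻ t in Set.Ioo (0:ℝ) 1, f t) ≤ C * N f

/-- The norm in `X` of an `ℝ≥0∞`-valued function on `Q₀`, computed through the
representation space: `‖g‖_X = ‖g*‖_{X̄}`. -/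
def RISpace.normE (X : RISpace) (Q₀ : Cube n) (g : (Fin n → ℝ) → ℝ≥0∞) : ℝ≥0∞ :=
  X.N (rearr Q₀ g)

/-- The norm `‖f‖_X = ‖f*‖_{X̄}` of a real function on `Q₀`. -/
def RISpace.normF (X : RISpace) (Q₀ : Cube n) (f : (Fin n → ℝ) → ℝ) : ℝ≥0∞ :=
  X.N (rearrF Q₀ f)

/-- The Garsia–Rodemich functional `‖f‖_{GaRo_X} = inf {‖γ‖_X : γ ∈ Γ_f}`. -/
def GaRoNorm (X : RISpace) (Q₀ : Cube n) (f : (Fin n → ℝ) → ℝ) : ℝ≥0∞ :=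
  ⨅ γ ∈ {γ | MemGamma Q₀ f γ}, X.normF Q₀ γ

/-- `f ∈ GaRo_X`: `f ∈ L¹(Q₀)` and `Γ_f ∩ X ≠ ∅`. -/
def MemGaRo (X : RISpace) (Q₀ : Cube n) (f : (Fin n → ℝ) → ℝ) : Prop :=
  IntegrableOn f Q₀.set volume ∧ ∃ γ, MemGamma Q₀ f γ ∧ X.normF Q₀ γ < ⊤

/-- `f ∈ X`. -/
def MemX (X : RISpace) (Q₀ : Cube n) (f : (Fin n → ℝ) → ℝ) : Prop :=
  IntegrableOn f Q₀.set volume ∧ X.normF Q₀ f < ⊤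

/-- Decreasing rearrangement on `(0,1)` of an `ℝ≥0∞`-valued function on `(0,1)`. -/
def rearrI (g : ℝ → ℝ≥0∞) (t : ℝ) : ℝ≥0∞ :=
  sInf {a : ℝ≥0∞ | volume {u ∈ Set.Ioo (0:ℝ) 1 | a < g u} ≤ ENNReal.ofReal t}

/-- The dilation operator `σ_s g (t) = g*(t/s)` for `0 < t < min s 1`, `0` otherwise. -/
def dil (s : ℝ) (g : ℝ → ℝ≥0∞) (t : ℝ) : ℝ≥0∞ :=
  if 0 < t ∧ t < min s 1 then rearrI g (t / s) else 0

/-- The operator norm `‖σ_s‖_{X̄ → X̄}`. -/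
def RISpace.dilNorm (X : RISpace) (s : ℝ) : ℝ≥0∞ :=
  ⨆ g ∈ {g : ℝ → ℝ≥0∞ | Measurable g ∧ X.N g ≤ 1}, X.N (dil s g)

/-- The lower Boyd index `α_X = lim_{s → 0+} log ‖σ_s‖ / log s`. -/
def RISpace.boydLower (X : RISpace) : ℝ :=
  limUnder (nhdsWithin (0:ℝ) (Set.Ioi 0)) fun s : ℝ =>
    Real.log (X.dilNorm s).toReal / Real.log s

/-- The upper Boyd index `β_X = lim_{s → ∞} log ‖σ_s‖ / log s`. -/
def RISpace.boydUpper (X : RISpace) : ℝ :=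
  limUnder atTop fun s : ℝ => Real.log (X.dilNorm s).toReal / Real.log s

/-- The fundamental function `φ_X(s) = ‖χ_{(0,s)}‖_{X̄}`. -/
def RISpace.fund (X : RISpace) (s : ℝ) : ℝ≥0∞ :=
  X.N ((Set.Ioo (0:ℝ) s).indicator fun _ => 1)

/-- `X` is of fundamental type: `‖σ_t‖ ≤ C sup_{s > 0, st ≤ 1} φ_X(st)/φ_X(s)`. -/
def RISpace.FundamentalType (X : RISpace) : Prop :=
  ∃ C : ℝ≥0∞, C ≠ ⊤ ∧ ∀ t : ℝ, 0 < t →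
    X.dilNorm t ≤ C * ⨆ s ∈ {s : ℝ | 0 < s ∧ s * t ≤ 1}, X.fund (s * t) / X.fund s

/-- The `BMO(Q₀)` seminorm `sup_{Q ⊆ Q₀} (1/|Q|) ∫_Q |f - f_Q|`. -/
def bmoNormE (Q₀ : Cube n) (f : (Fin n → ℝ) → ℝ) : ℝ≥0∞ :=
  ⨆ Q ∈ {Q : Cube n | Q.set ⊆ Q₀.set}, oscAvg f Q

/-- The `L¹(Q₀)` norm, extended-real-valued. -/
def L1normE (Q₀ : Cube n) (f : (Fin n → ℝ) → ℝ) : ℝ≥0∞ :=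
  ∫⁻ x in Q₀.set, ENNReal.ofReal |f x|

/-- The Peetre K-functional for the couple `(L¹(Q₀), BMO(Q₀))` (modulo constants). -/
def KL1BMO (Q₀ : Cube n) (t : ℝ) (f : (Fin n → ℝ) → ℝ) : ℝ≥0∞ :=
  ⨅ g : (Fin n → ℝ) → ℝ,
    (L1normE Q₀ fun x => f x - g x) + ENNReal.ofReal t * bmoNormE Q₀ g

/-- The unit cube `[0,1] ⊆ ℝ¹`, used to model the interval `(0,1)`. -/
def unitCube : Cube 1 := ⟨fun _ => 0, 1, one_pos⟩

/-- The John–Nirenberg functional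
`‖f‖_{JN_p} = sup_π (Σᵢ |Qᵢ| ((1/|Qᵢ|) ∫_{Qᵢ} |f - f_{Qᵢ}|)^p)^{1/p}`. -/
def JNnorm (Q₀ : Cube n) (p : ℝ) (f : (Fin n → ℝ) → ℝ) : ℝ≥0∞ :=
  ⨆ π ∈ {π : Set (Cube n) | IsPacking Q₀ π},
    (∑' Q : π, (Q : Cube n).vol * oscAvg f (Q : Cube n) ^ p) ^ (1 / p)

/-- `γ ∈ Γ'_f`: `γ ∈ L¹(Q₀)` and `f^#_{Q₀} ≤ M_{Q₀} γ` on `Q₀`. -/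
def MemGammaP (Q₀ : Cube n) (f γ : (Fin n → ℝ) → ℝ) : Prop :=
  IntegrableOn γ Q₀.set volume ∧ ∀ x ∈ Q₀.set, sharpMax Q₀ f x ≤ hlMax Q₀ γ x

/-- `S_{π,#}(f) = Σ_{Q ∈ π} ((1/|Q|) ∫_Q |f - f_Q|) χ_Q`. -/
def packFn (π : Set (Cube n)) (f : (Fin n → ℝ) → ℝ) (x : Fin n → ℝ) : ℝ≥0∞ :=
  ∑' Q : π, (Q : Cube n).set.indicator (fun _ => oscAvg f (Q : Cube n)) x

/-- `F_{f,#}(t) = sup_{π packing} (S_{π,#}(f))*(t)`. -/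
def Fsharp (Q₀ : Cube n) (f : (Fin n → ℝ) → ℝ) (t : ℝ) : ℝ≥0∞ :=
  ⨆ π ∈ {π : Set (Cube n) | IsPacking Q₀ π}, rearr Q₀ (packFn π f) t

/-- The `GaRo_{∞,λ}` functional: the least constant `C` such that, for every packing,
`Σᵢ (1/|Qᵢ|) ∫∫ |f x - f y| ≤ C Σᵢ |Qᵢ|^{1+λ/n}`. -/
def GaRoLamNorm (Q₀ : Cube n) (lam : ℝ) (f : (Fin n → ℝ) → ℝ) : ℝ≥0∞ :=
  sInf {C : ℝ≥0∞ | ∀ π : Set (Cube n), IsPacking Q₀ π →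
    ∑' Q : π, dblOsc f (Q : Cube n) ≤ C * ∑' Q : π, (Q : Cube n).vol ^ (1 + lam / (n : ℝ))}

/-- The homogeneous Campanato seminorm
`‖f‖_{𝓛̇^{1,λ}} = sup_{Q ⊆ Q₀} |Q|^{-λ/n} (1/|Q|) ∫_Q |f - f_Q|`. -/
def campNorm (Q₀ : Cube n) (lam : ℝ) (f : (Fin n → ℝ) → ℝ) : ℝ≥0∞ :=
  ⨆ Q ∈ {Q : Cube n | Q.set ⊆ Q₀.set}, Q.vol ^ (-(lam / (n : ℝ))) * oscAvg f Q

/-- The Gagliardo (fractional Sobolev) seminorm `‖f‖_{W^{α,p}}` on `Q₀`. -/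
def sobNorm (Q₀ : Cube n) (a p : ℝ) (f : (Fin n → ℝ) → ℝ) : ℝ≥0∞ :=
  (∫⁻ x in Q₀.set, ∫⁻ y in Q₀.set,
      ENNReal.ofReal
        (|f x - f y| ^ p / Real.sqrt (∑ i, (x i - y i) ^ 2) ^ ((n : ℝ) + a * p))) ^ (1 / p)


/-!
Let `β = f*(t)`, `a = (f^#)*(t)` and let `G` be the set where `|f| > β` or `f^# > a`, so that
`|G| ≤ 2t` and `2|G| < |Q₀|`. The maximal dyadic subcubes of `Q₀` in which `G` has density
more than `1/2` have total measure at most `2|G|`, and by the Lebesgue density theorem they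
cover `G` up to a null set. The dyadic parent `P` of such a cube `Q` has at least half of its
measure outside `G`: there `|f| ≤ β`, and some point of it has `f^# ≤ a`, so `|f_P| - β ≤ 2a`
and `∫_Q (|f| - β)₊ ≤ (2ⁿ + 2) a |Q|`. Summing, `∫_{Q₀} (|f| - β)₊ ≤ 4 (2ⁿ + 2) a t`, while
comparing distribution functions gives `∫₀ᵗ f* ≤ ∫_{Q₀} (|f| - β)₊ + β t`.
-/

lemma ENNReal.ofReal_abs_le_ofReal_abs_sub_add (a b : ℝ) :
    ENNReal.ofReal |a| ≤ ENNReal.ofReal |a - b| + ENNReal.ofReal |b| := by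
  rw [← ENNReal.ofReal_add (abs_nonneg _) (abs_nonneg _)]
  exact ENNReal.ofReal_le_ofReal (by linarith [abs_sub_abs_le_abs_sub a b])

section Oscillation

variable {α : Type*} [MeasurableSpace α] {μ : Measure α} {f : α → ℝ} {β : ℝ≥0∞}

lemma ofReal_abs_sub_mul_measure_le {A P : Set α} (hA : MeasurableSet A) (hAP : A ⊆ P)
    (hfA : ∀ x ∈ A, ENNReal.ofReal |f x| ≤ β) (m : ℝ) :
    (ENNReal.ofReal |m| - β) * μ A ≤ ∫⁻ x in P, ENNReal.ofReal |f x - m| ∂μ :=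
  calc (ENNReal.ofReal |m| - β) * μ A = ∫⁻ _ in A, (ENNReal.ofReal |m| - β) ∂μ :=
        (setLIntegral_const _ _).symm
    _ ≤ ∫⁻ x in A, ENNReal.ofReal |f x - m| ∂μ := by
        refine setLIntegral_mono' hA fun x hx => tsub_le_iff_right.2 ?_
        calc ENNReal.ofReal |m| ≤ ENNReal.ofReal |m - f x| + ENNReal.ofReal |f x| :=
              ENNReal.ofReal_abs_le_ofReal_abs_sub_add _ _
          _ ≤ ENNReal.ofReal |f x - m| + β := by rw [abs_sub_comm]; gcongr; exact hfA x hx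
    _ ≤ ∫⁻ x in P, ENNReal.ofReal |f x - m| ∂μ := lintegral_mono_set hAP

lemma setLIntegral_sub_le_add (S : Set α) (m : ℝ) :
    ∫⁻ x in S, (ENNReal.ofReal |f x| - β) ∂μ ≤
      (∫⁻ x in S, ENNReal.ofReal |f x - m| ∂μ) + (ENNReal.ofReal |m| - β) * μ S :=
  calc ∫⁻ x in S, (ENNReal.ofReal |f x| - β) ∂μ
      ≤ ∫⁻ x in S, (ENNReal.ofReal |f x - m| + (ENNReal.ofReal |m| - β)) ∂μ :=
        lintegral_mono fun x => (tsub_le_tsub_right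
          (ENNReal.ofReal_abs_le_ofReal_abs_sub_add _ _) β).trans add_tsub_le_assoc
    _ = _ := by rw [lintegral_add_right _ measurable_const, setLIntegral_const]

end Oscillation

lemma MeasureTheory.lintegral_eq_lintegral_meas_ofReal_lt {α : Type*} [MeasurableSpace α]
    {μ : Measure α} {φ : α → ℝ≥0∞} (hφ : AEMeasurable φ μ) (hfin : ∀ᵐ x ∂μ, φ x ≠ ∞) :
    ∫⁻ x, φ x ∂μ = ∫⁻ l in Ioi 0, μ {x | ENNReal.ofReal l < φ x} := by
  have hae : φ =ᵐ[μ] fun x => ENNReal.ofReal (φ x).toReal :=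
    hfin.mono fun x hx => (ENNReal.ofReal_toReal hx).symm
  rw [lintegral_congr_ae hae, lintegral_eq_lintegral_meas_lt μ
    (Eventually.of_forall fun x => ENNReal.toReal_nonneg) hφ.ennreal_toReal]
  refine setLIntegral_congr_fun measurableSet_Ioi fun l hl => measure_congr ?_
  filter_upwards [hfin] with x hx
  exact propext (ENNReal.ofReal_lt_iff_lt_toReal (le_of_lt hl) hx).symm

lemma MeasureTheory.lintegral_le_lintegral_of_meas_lt_le {α α' : Type*} [MeasurableSpace α]
    [MeasurableSpace α'] {μ : Measure α} {ν : Measure α'} {φ : α → ℝ≥0∞} {ψ : α' → ℝ≥0∞}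
    (hφ : AEMeasurable φ μ) (hψ : AEMeasurable ψ ν) (hφ_fin : ∀ᵐ x ∂μ, φ x ≠ ∞)
    (hψ_fin : ∀ᵐ y ∂ν, ψ y ≠ ∞)
    (h : ∀ l : ℝ, 0 < l → μ {x | ENNReal.ofReal l < φ x} ≤ ν {y | ENNReal.ofReal l < ψ y}) :
    ∫⁻ x, φ x ∂μ ≤ ∫⁻ y, ψ y ∂ν := by
  rw [lintegral_eq_lintegral_meas_ofReal_lt hφ hφ_fin,
    lintegral_eq_lintegral_meas_ofReal_lt hψ hψ_fin]
  exact setLIntegral_mono' measurableSet_Ioi h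

open Topology

namespace Cube

lemma measurableSet_set (Q : Cube n) : MeasurableSet Q.set := measurableSet_Icc

lemma volume_set (Q : Cube n) : volume Q.set = ENNReal.ofReal Q.side ^ n := by
  simp [Cube.set, Real.volume_Icc_pi, Finset.prod_const]

lemma volume_set_ne_zero (Q : Cube n) : volume Q.set ≠ 0 := by
  simp [volume_set, Q.side_pos]

lemma volume_set_ne_top (Q : Cube n) : volume Q.set ≠ ∞ := by
  simp [volume_set]

lemma set_subset_closedBall {Q : Cube n} {x : Fin n → ℝ} (hx : x ∈ Q.set) :
    Q.set ⊆ Metric.closedBall x Q.side := by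
  intro y hy
  rw [Metric.mem_closedBall, dist_pi_le_iff Q.side_pos.le]
  intro i
  have := hx.1 i; have := hx.2 i; have := hy.1 i; have := hy.2 i
  rw [Real.dist_eq, abs_le]
  constructor <;> linarith

lemma volume_closedBall_side (Q : Cube n) (x : Fin n → ℝ) :
    volume (Metric.closedBall x Q.side) = 2 ^ n * volume Q.set := by
  rw [Real.volume_pi_closedBall _ Q.side_pos.le, volume_set, Fintype.card_fin, mul_pow,
    ENNReal.ofReal_mul (by positivity), ENNReal.ofReal_pow zero_le_two, ENNReal.ofReal_ofNat,
    ENNReal.ofReal_pow Q.side_pos.le]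

def halfOpen (Q : Cube n) : Set (Fin n → ℝ) :=
  Set.pi univ fun i => Ico (Q.corner i) (Q.corner i + Q.side)

lemma volume_set_sdiff_halfOpen (Q : Cube n) : volume (Q.set \ Q.halfOpen) = 0 :=
  ae_le_set.1 (Measure.univ_pi_Ico_ae_eq_Icc (μ := fun _ => volume)).symm.le

lemma halfOpen_subset_set (Q : Cube n) : Q.halfOpen ⊆ Q.set :=
  fun _ hx => ⟨fun i => (hx i trivial).1, fun i => (hx i trivial).2.le⟩

def dyadic (Q : Cube n) (k : ℕ) (j : Fin n → ℕ) : Cube n :=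
  ⟨fun i => Q.corner i + j i * (Q.side / 2 ^ k), Q.side / 2 ^ k,
    div_pos Q.side_pos (by positivity)⟩

variable (Q : Cube n) {k m : ℕ} {j : Fin n → ℕ}

@[simp] lemma dyadic_zero : Q.dyadic 0 0 = Q := by
  cases Q; simp [dyadic]

lemma dyadic_set_subset (hj : ∀ i, j i < 2 ^ k) : (Q.dyadic k j).set ⊆ Q.set := by
  have hs : 0 < Q.side / 2 ^ k := (Q.dyadic k j).side_pos
  refine Icc_subset_Icc (fun i => ?_) (fun i => ?_)
  · exact le_add_of_nonneg_right (by positivity)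
  · have hji : (j i : ℝ) + 1 ≤ 2 ^ k := by exact_mod_cast hj i
    have h2 : (2 : ℝ) ^ k * (Q.side / 2 ^ k) = Q.side := by field_simp
    simp only [dyadic]
    nlinarith

lemma dyadic_succ_set_subset : (Q.dyadic (k + 1) j).set ⊆ (Q.dyadic k fun i => j i / 2).set := by
  have hs : 0 < Q.side / 2 ^ (k + 1) := (Q.dyadic (k + 1) j).side_pos
  have h2 : Q.side / 2 ^ k = 2 * (Q.side / 2 ^ (k + 1)) := by rw [pow_succ]; field_simp
  refine Icc_subset_Icc (fun i => ?_) (fun i => ?_) <;> simp only [dyadic] <;> rw [h2]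
  · have : ((j i / 2 : ℕ) : ℝ) * 2 ≤ j i := by exact_mod_cast Nat.div_mul_le_self (j i) 2
    nlinarith
  · have : (j i : ℝ) + 1 ≤ ((j i / 2 : ℕ) : ℝ) * 2 + 2 := by
      exact_mod_cast (by omega : j i + 1 ≤ j i / 2 * 2 + 2)
    nlinarith

lemma volume_dyadic_div_two :
    volume (Q.dyadic k fun i => j i / 2).set = 2 ^ n * volume (Q.dyadic (k + 1) j).set := by
  have h2 : Q.side / 2 ^ k = 2 * (Q.side / 2 ^ (k + 1)) := by rw [pow_succ]; field_simp
  simp only [volume_set, dyadic]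
  rw [h2, ENNReal.ofReal_mul zero_le_two, mul_pow, ENNReal.ofReal_ofNat]

def dyadicIndex (Q : Cube n) (k : ℕ) (x : Fin n → ℝ) : Fin n → ℕ :=
  fun i => ⌊(x i - Q.corner i) / (Q.side / 2 ^ k)⌋₊

variable {Q} {x : Fin n → ℝ}

lemma mem_halfOpen_dyadic_iff (hx : Q.corner ≤ x) :
    x ∈ (Q.dyadic k j).halfOpen ↔ Q.dyadicIndex k x = j := by
  have hs : 0 < Q.side / 2 ^ k := (Q.dyadic k j).side_pos
  simp only [halfOpen, dyadic, dyadicIndex, Set.mem_pi, Set.mem_univ, true_implies, Set.mem_Ico,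
    funext_iff, Nat.floor_eq_iff (div_nonneg (sub_nonneg.2 (hx _)) hs.le), le_div_iff₀ hs,
    div_lt_iff₀ hs]
  refine forall_congr' fun i => and_congr ?_ ?_ <;> constructor <;> intro h <;> linarith

lemma mem_halfOpen_dyadic_dyadicIndex (hx : Q.corner ≤ x) (k : ℕ) :
    x ∈ (Q.dyadic k (Q.dyadicIndex k x)).halfOpen :=
  (mem_halfOpen_dyadic_iff hx).2 rfl

lemma dyadicIndex_lt (hx : x ∈ Q.halfOpen) (k : ℕ) (i : Fin n) : Q.dyadicIndex k x i < 2 ^ k := by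
  have hs : 0 < Q.side / 2 ^ k := div_pos Q.side_pos (by positivity)
  have h2 : (2 : ℝ) ^ k * (Q.side / 2 ^ k) = Q.side := by field_simp
  have := hx i trivial
  rw [dyadicIndex, Nat.floor_lt (div_nonneg (sub_nonneg.2 this.1) hs.le), div_lt_iff₀ hs]
  push_cast
  linarith [this.2]

lemma dyadicIndex_div (hmk : m ≤ k) (i : Fin n) :
    Q.dyadicIndex k x i / 2 ^ (k - m) = Q.dyadicIndex m x i := by
  have h2 : (2 : ℝ) ^ k = 2 ^ m * 2 ^ (k - m) := by rw [← pow_add, Nat.add_sub_cancel' hmk]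
  simp only [dyadicIndex]
  rw [← Nat.floor_div_natCast]
  congr 1
  push_cast
  rw [h2]
  field_simp

lemma corner_le_of_mem_halfOpen_dyadic (hx : x ∈ (Q.dyadic k j).halfOpen) :
    Q.corner ≤ x := fun i =>
  (le_add_of_nonneg_right (mul_nonneg (Nat.cast_nonneg _) (Q.dyadic k j).side_pos.le)).trans
    (hx i trivial).1

lemma volume_dyadic_inter_eq_zero {j' : Fin n → ℕ} (hmk : m ≤ k)
    (hne : (fun i => j' i / 2 ^ (k - m)) ≠ j) :
    volume ((Q.dyadic m j).set ∩ (Q.dyadic k j').set) = 0 := by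
  have hdisj : Disjoint (Q.dyadic m j).halfOpen (Q.dyadic k j').halfOpen := by
    refine Set.disjoint_left.2 fun x hx hx' => hne ?_
    have hc := corner_le_of_mem_halfOpen_dyadic hx
    rw [← (mem_halfOpen_dyadic_iff hc).1 hx, ← (mem_halfOpen_dyadic_iff hc).1 hx']
    exact funext fun i => dyadicIndex_div hmk i
  refine measure_mono_null (fun x hx => ?_) (measure_union_null
    (volume_set_sdiff_halfOpen (Q.dyadic m j)) (volume_set_sdiff_halfOpen (Q.dyadic k j')))
  by_contra h
  simp only [Set.mem_union, Set.mem_sdiff, not_or, not_and, not_not] at h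
  exact Set.disjoint_left.1 hdisj (h.1 hx.1) (h.2 hx.2)

variable {G : Set (Fin n → ℝ)}

def IsHeavy (P : Cube n) (G : Set (Fin n → ℝ)) : Prop :=
  volume P.set < 2 * volume (P.set ∩ G)

lemma volume_set_le_two_mul_volume_sdiff {P : Cube n} (hG : MeasurableSet G) (hP : ¬ P.IsHeavy G) :
    volume P.set ≤ 2 * volume (P.set \ G) := by
  rw [IsHeavy, not_lt] at hP
  refine ENNReal.le_of_add_le_add_left P.volume_set_ne_top ?_
  calc volume P.set + volume P.set = 2 * volume (P.set ∩ G) + 2 * volume (P.set \ G) := by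
        rw [← mul_add, measure_inter_add_sdiff _ hG, two_mul]
    _ ≤ volume P.set + 2 * volume (P.set \ G) := by gcongr

lemma inv_two_pow_le_volume_compl_inter_closedBall_div {P : Cube n} {x : Fin n → ℝ}
    (hx : x ∈ P.set) (hG : MeasurableSet G) (hP : ¬ P.IsHeavy G) :
    (2 ^ (n + 1))⁻¹ ≤
      volume (Gᶜ ∩ Metric.closedBall x P.side) / volume (Metric.closedBall x P.side) := by
  rw [volume_closedBall_side, ENNReal.le_div_iff_mul_le (Or.inl (by simp [P.volume_set_ne_zero]))
    (Or.inl (ENNReal.mul_ne_top (by simp) P.volume_set_ne_top))]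
  calc (2 ^ (n + 1))⁻¹ * (2 ^ n * volume P.set)
      = ((2 ^ n)⁻¹ * 2 ^ n) * (volume P.set / 2) := by
        rw [pow_succ, ENNReal.mul_inv (by simp) (by simp), div_eq_mul_inv]; ring
    _ = volume P.set / 2 := by rw [ENNReal.inv_mul_cancel (by simp) (by simp), one_mul]
    _ ≤ volume (P.set \ G) := ENNReal.div_le_of_le_mul' (volume_set_le_two_mul_volume_sdiff hG hP)
    _ ≤ volume (Gᶜ ∩ Metric.closedBall x P.side) :=
        measure_mono fun y hy => ⟨hy.2, set_subset_closedBall hx hy.1⟩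

def maximalHeavy (Q : Cube n) (G : Set (Fin n → ℝ)) : Set (ℕ × (Fin n → ℕ)) :=
  {p | (∀ i, p.2 i < 2 ^ p.1) ∧ (Q.dyadic p.1 p.2).IsHeavy G ∧
    ∀ m < p.1, ¬ (Q.dyadic m fun i => p.2 i / 2 ^ (p.1 - m)).IsHeavy G}

variable {Q : Cube n} {k : ℕ}

lemma exists_mem_maximalHeavy {x : Fin n → ℝ} (hx : x ∈ Q.halfOpen)
    (hk : (Q.dyadic k (Q.dyadicIndex k x)).IsHeavy G) :
    ∃ p ∈ Q.maximalHeavy G, x ∈ (Q.dyadic p.1 p.2).set := by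
  classical
  have hex : ∃ k, (Q.dyadic k (Q.dyadicIndex k x)).IsHeavy G := ⟨k, hk⟩
  refine ⟨(Nat.find hex, Q.dyadicIndex (Nat.find hex) x),
    ⟨dyadicIndex_lt hx _, Nat.find_spec hex, fun m hm => ?_⟩,
    halfOpen_subset_set _ (mem_halfOpen_dyadic_dyadicIndex (fun i => (hx i trivial).1) _)⟩
  simp only [dyadicIndex_div hm.le]
  exact Nat.find_min hex hm

lemma volume_sdiff_iUnion_maximalHeavy (hG : MeasurableSet G) (hGQ : G ⊆ Q.set) :
    volume (G \ ⋃ p : Q.maximalHeavy G, (Q.dyadic p.1.1 p.1.2).set) = 0 := by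
  have hdens := ae_iff.1 (Besicovitch.ae_tendsto_measure_inter_div_of_measurableSet volume hG.compl)
  refine measure_mono_null (fun x ⟨hxG, hxU⟩ => ?_)
    (measure_union_null hdens Q.volume_set_sdiff_halfOpen)
  by_cases hxQ : x ∈ Q.halfOpen
  swap
  · exact Or.inr ⟨hGQ hxG, hxQ⟩
  refine Or.inl fun hlim => ?_
  rw [Set.indicator_of_notMem (not_not.2 hxG)] at hlim
  have hlight : ∀ k, ¬ (Q.dyadic k (Q.dyadicIndex k x)).IsHeavy G := fun k hk =>
    let ⟨p, hp, hxp⟩ := exists_mem_maximalHeavy hxQ hk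
    hxU (mem_iUnion.2 ⟨⟨p, hp⟩, hxp⟩)
  have hr : Tendsto (fun k : ℕ => Q.side / 2 ^ k) atTop (𝓝[>] 0) :=
    tendsto_nhdsWithin_iff.2 ⟨tendsto_const_nhds.div_atTop
      (tendsto_pow_atTop_atTop_of_one_lt one_lt_two),
      Eventually.of_forall fun k => div_pos Q.side_pos (by positivity)⟩
  have := ge_of_tendsto' (hlim.comp hr) fun k =>
    inv_two_pow_le_volume_compl_inter_closedBall_div (halfOpen_subset_set _
      (mem_halfOpen_dyadic_dyadicIndex (fun i => (hxQ i trivial).1) k)) hG (hlight k)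
  simp at this

lemma volume_inter_eq_zero_of_mem_maximalHeavy {p q : ℕ × (Fin n → ℕ)}
    (hp : p ∈ Q.maximalHeavy G) (hq : q ∈ Q.maximalHeavy G) (hpq : p ≠ q) :
    volume ((Q.dyadic p.1 p.2).set ∩ (Q.dyadic q.1 q.2).set) = 0 := by
  wlog hle : p.1 ≤ q.1 generalizing p q
  · rw [Set.inter_comm]; exact this hq hp hpq.symm (le_of_not_ge hle)
  refine volume_dyadic_inter_eq_zero hle fun hanc => ?_
  rcases hle.eq_or_lt with heq | hlt
  · exact hpq (Prod.ext heq (by rw [← hanc, heq]; simp))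
  · exact hq.2.2 p.1 hlt (hanc ▸ hp.2.1)

lemma tsum_volume_maximalHeavy_le (hG : MeasurableSet G) :
    ∑' p : Q.maximalHeavy G, volume (Q.dyadic p.1.1 p.1.2).set ≤ 2 * volume G := by
  calc ∑' p : Q.maximalHeavy G, volume (Q.dyadic p.1.1 p.1.2).set
      ≤ ∑' p : Q.maximalHeavy G, 2 * volume ((Q.dyadic p.1.1 p.1.2).set ∩ G) :=
        ENNReal.tsum_le_tsum fun p => p.2.2.1.le
    _ = 2 * volume (⋃ p : Q.maximalHeavy G, (Q.dyadic p.1.1 p.1.2).set ∩ G) := by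
        rw [ENNReal.tsum_mul_left, measure_iUnion₀ (fun p q hpq => ?_)
          fun p => ((Q.dyadic _ _).measurableSet_set.inter hG).nullMeasurableSet]
        exact measure_mono_null (inter_subset_inter inter_subset_left inter_subset_left)
          (volume_inter_eq_zero_of_mem_maximalHeavy p.2 q.2 (Subtype.coe_ne_coe.2 hpq))
    _ ≤ 2 * volume G := by gcongr; exact iUnion_subset fun p => inter_subset_right

lemma exists_parent_of_mem_maximalHeavy (hQ : ¬ Q.IsHeavy G) {p : ℕ × (Fin n → ℕ)}
    (hp : p ∈ Q.maximalHeavy G) :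
    ∃ k, p.1 = k + 1 ∧ (∀ i, p.2 i / 2 < 2 ^ k) ∧ ¬ (Q.dyadic k fun i => p.2 i / 2).IsHeavy G := by
  obtain ⟨_ | k, j⟩ := p
  · obtain rfl : j = 0 := funext fun i => by simpa using hp.1 i
    exact absurd hp.2.1 (by simpa using hQ)
  · refine ⟨k, rfl, fun i => ?_, by simpa using hp.2.2 k k.lt_succ_self⟩
    have := hp.1 i
    rw [pow_succ] at this
    omega

lemma setLIntegral_le_tsum_maximalHeavy (hG : MeasurableSet G) (hGQ : G ⊆ Q.set)
    {φ : (Fin n → ℝ) → ℝ≥0∞} (hφ : ∀ x ∈ Q.set \ G, φ x = 0) :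
    ∫⁻ x in Q.set, φ x ≤ ∑' p : Q.maximalHeavy G, ∫⁻ x in (Q.dyadic p.1.1 p.1.2).set, φ x :=
  calc ∫⁻ x in Q.set, φ x = ∫⁻ x in G, φ x := by
        rw [← lintegral_inter_add_sdiff _ Q.set hG,
          setLIntegral_congr_fun (Q.measurableSet_set.diff hG) hφ, lintegral_zero, add_zero,
          inter_eq_right.2 hGQ]
    _ ≤ ∫⁻ x in ⋃ p : Q.maximalHeavy G, (Q.dyadic p.1.1 p.1.2).set, φ x :=
        lintegral_mono_set' (ae_le_set.2 (volume_sdiff_iUnion_maximalHeavy hG hGQ))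
    _ ≤ _ := lintegral_iUnion_le _ _

end Cube

section CalderonZygmund

variable {f : (Fin n → ℝ) → ℝ} {β a : ℝ≥0∞} {G : Set (Fin n → ℝ)}

/-- At least half of `P` lies where `|f| ≤ β`; averaging `|f - f_P|` over that part gives
`|f_P| - β ≤ 2 a`. -/
lemma setLIntegral_sub_le_of_not_isHeavy {P : Cube n} {S : Set (Fin n → ℝ)}
    (hG : MeasurableSet G) (hP : ¬ P.IsHeavy G) (hSP : S ⊆ P.set)
    (hfP : ∀ x ∈ P.set \ G, ENNReal.ofReal |f x| ≤ β) (hosc : oscAvg f P ≤ a) :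
    ∫⁻ x in S, (ENNReal.ofReal |f x| - β) ≤ a * volume P.set + 2 * a * volume S := by
  have hint : ∫⁻ x in P.set, ENNReal.ofReal |f x - cubeAvg f P| ≤ a * volume P.set := by
    rw [← ENNReal.div_mul_cancel P.volume_set_ne_zero P.volume_set_ne_top
      (b := ∫⁻ x in P.set, ENNReal.ofReal |f x - cubeAvg f P|)]
    exact mul_le_mul_left hosc _
  have hmean : ENNReal.ofReal |cubeAvg f P| - β ≤ 2 * a := by
    refine (ENNReal.mul_le_mul_iff_left P.volume_set_ne_zero P.volume_set_ne_top).1 ?_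
    calc (ENNReal.ofReal |cubeAvg f P| - β) * volume P.set
        ≤ (ENNReal.ofReal |cubeAvg f P| - β) * (2 * volume (P.set \ G)) := by
          gcongr; exact Cube.volume_set_le_two_mul_volume_sdiff hG hP
      _ = 2 * ((ENNReal.ofReal |cubeAvg f P| - β) * volume (P.set \ G)) := by ring
      _ ≤ 2 * (a * volume P.set) := by
          gcongr 2 * ?_
          exact (ofReal_abs_sub_mul_measure_le (P.measurableSet_set.diff hG) sdiff_subset
            hfP _).trans hint
      _ = 2 * a * volume P.set := by ring
  calc ∫⁻ x in S, (ENNReal.ofReal |f x| - β)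
      ≤ (∫⁻ x in S, ENNReal.ofReal |f x - cubeAvg f P|) +
          (ENNReal.ofReal |cubeAvg f P| - β) * volume S := setLIntegral_sub_le_add S _
    _ ≤ a * volume P.set + 2 * a * volume S :=
        add_le_add ((lintegral_mono_set hSP).trans hint) (by gcongr)

theorem setLIntegral_sub_le_of_sharpMax_le {Q₀ : Cube n} (hG : MeasurableSet G)
    (hGQ : G ⊆ Q₀.set) (hG2 : 2 * volume G ≤ volume Q₀.set)
    (hgood : ∀ x ∈ Q₀.set \ G, ENNReal.ofReal |f x| ≤ β ∧ sharpMax Q₀ f x ≤ a) :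
    ∫⁻ x in Q₀.set, (ENNReal.ofReal |f x| - β) ≤ (2 ^ n + 2) * a * (2 * volume G) := by
  have hQ : ¬ Q₀.IsHeavy G := by rwa [Cube.IsHeavy, not_lt, inter_eq_right.2 hGQ]
  have hcube : ∀ p ∈ Q₀.maximalHeavy G, ∫⁻ x in (Q₀.dyadic p.1 p.2).set,
      (ENNReal.ofReal |f x| - β) ≤ (2 ^ n + 2) * a * volume (Q₀.dyadic p.1 p.2).set := by
    rintro ⟨_, j⟩ hp
    obtain ⟨k, hk, hj, hP⟩ := Cube.exists_parent_of_mem_maximalHeavy hQ hp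
    dsimp only at hk hj hP ⊢
    subst hk
    set P := Q₀.dyadic k fun i => j i / 2
    have hPQ : P.set ⊆ Q₀.set := Q₀.dyadic_set_subset hj
    obtain ⟨x₀, hx₀P, hx₀G⟩ : (P.set \ G).Nonempty := nonempty_of_measure_ne_zero fun h => by
      have := Cube.volume_set_le_two_mul_volume_sdiff hG hP
      rw [h, mul_zero, nonpos_iff_eq_zero] at this
      exact P.volume_set_ne_zero this
    have hosc : oscAvg f P ≤ a :=
      (le_biSup (oscAvg f) (show P ∈ subcubesAt Q₀ x₀ from ⟨hPQ, hx₀P⟩)).trans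
        (hgood x₀ ⟨hPQ hx₀P, hx₀G⟩).2
    calc _ ≤ a * volume P.set + 2 * a * volume (Q₀.dyadic (k + 1) j).set :=
          setLIntegral_sub_le_of_not_isHeavy hG hP (Q₀.dyadic_succ_set_subset)
            (fun x hx => (hgood x ⟨hPQ hx.1, hx.2⟩).1) hosc
      _ = _ := by rw [Q₀.volume_dyadic_div_two]; ring
  calc ∫⁻ x in Q₀.set, (ENNReal.ofReal |f x| - β)
      ≤ ∑' p : Q₀.maximalHeavy G, ∫⁻ x in (Q₀.dyadic p.1.1 p.1.2).set,
          (ENNReal.ofReal |f x| - β) :=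
        Cube.setLIntegral_le_tsum_maximalHeavy hG hGQ fun x hx => tsub_eq_zero_of_le (hgood x hx).1
    _ ≤ ∑' p : Q₀.maximalHeavy G, (2 ^ n + 2) * a * volume (Q₀.dyadic p.1.1 p.1.2).set :=
        ENNReal.tsum_le_tsum fun p => hcube p p.2
    _ ≤ (2 ^ n + 2) * a * (2 * volume G) := by
        rw [ENNReal.tsum_mul_left]
        gcongr
        exact Cube.tsum_volume_maximalHeavy_le hG

end CalderonZygmund

section Rearrangement

variable {Q₀ : Cube n} {g : (Fin n → ℝ) → ℝ≥0∞}

lemma rearr_antitone (Q₀ : Cube n) (g : (Fin n → ℝ) → ℝ≥0∞) : Antitone (rearr Q₀ g) :=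
  fun _ _ h => sInf_le_sInf fun _ ha => ha.trans (ENNReal.ofReal_le_ofReal h)

lemma lt_volume_of_lt_rearr {t : ℝ} {A : ℝ≥0∞} (h : A < rearr Q₀ g t) :
    ENNReal.ofReal t < volume {x ∈ Q₀.set | A < g x} :=
  not_le.1 fun hle => (show rearr Q₀ g t ≤ A from sInf_le hle).not_gt h

lemma volume_rearr_lt_le (Q₀ : Cube n) (g : (Fin n → ℝ) → ℝ≥0∞) (t : ℝ) :
    volume {x ∈ Q₀.set | rearr Q₀ g t < g x} ≤ ENNReal.ofReal t := by
  set A := rearr Q₀ g t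
  rcases eq_or_ne A ∞ with hA | hA
  · simp [hA]
  have hunion : {x ∈ Q₀.set | A < g x} = ⋃ k : ℕ, {x ∈ Q₀.set | A + (k : ℝ≥0∞)⁻¹ < g x} := by
    ext x
    simp only [mem_ofPred_eq, mem_iUnion]
    constructor
    · rintro ⟨hx, hAx⟩
      obtain ⟨k, hk⟩ := ENNReal.exists_inv_nat_lt (tsub_pos_of_lt hAx).ne'
      exact ⟨k, hx, lt_tsub_iff_left.1 hk⟩
    · rintro ⟨k, hx, hk⟩
      exact ⟨hx, lt_of_le_of_lt le_self_add hk⟩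
  have hmono : Monotone fun k : ℕ => {x ∈ Q₀.set | A + (k : ℝ≥0∞)⁻¹ < g x} :=
    fun k l hkl x hx => And.imp_right (lt_of_le_of_lt (by gcongr)) hx
  rw [hunion, hmono.measure_iUnion]
  refine iSup_le fun k => ?_
  obtain ⟨b, hb, hbA⟩ := sInf_lt_iff.1
    (ENNReal.lt_add_right hA (ENNReal.inv_ne_zero.2 (ENNReal.natCast_ne_top k)))
  exact le_trans (measure_mono (t := {x ∈ Q₀.set | b < g x}) fun x hx => ⟨hx.1, hbA.trans hx.2⟩) hb

lemma rearr_lt_top (hg : AEMeasurable g (volume.restrict Q₀.set))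
    (hI : ∫⁻ x in Q₀.set, g x ≠ ∞) {t : ℝ} (ht : 0 < t) : rearr Q₀ g t < ∞ := by
  set A := (∫⁻ x in Q₀.set, g x) / ENNReal.ofReal t + 1
  have hA0 : A ≠ 0 := by simp [A]
  have hAtop : A ≠ ∞ := by simp [A, ENNReal.div_eq_top, hI, ht]
  refine lt_of_le_of_lt (sInf_le ?_) hAtop.lt_top
  calc volume {x ∈ Q₀.set | A < g x} ≤ volume.restrict Q₀.set {x | A ≤ g x} := by
        rw [Measure.restrict_apply' Q₀.measurableSet_set]
        exact measure_mono fun x hx => ⟨hx.2.le, hx.1⟩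
    _ ≤ (∫⁻ x in Q₀.set, g x) / A := meas_ge_le_lintegral_div hg hA0 hAtop
    _ ≤ ENNReal.ofReal t := by
        refine ENNReal.div_le_of_le_mul ?_
        calc ∫⁻ x in Q₀.set, g x
            = ENNReal.ofReal t * ((∫⁻ x in Q₀.set, g x) / ENNReal.ofReal t) :=
              (ENNReal.mul_div_cancel (by simp [ht]) ENNReal.ofReal_ne_top).symm
          _ ≤ ENNReal.ofReal t * A := by gcongr; exact le_self_add

lemma volume_lt_rearr_le_volume_lt (A : ℝ≥0∞) :
    volume {u ∈ Ioi (0 : ℝ) | A < rearr Q₀ g u} ≤ volume {x ∈ Q₀.set | A < g x} := by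
  set D := volume {x ∈ Q₀.set | A < g x}
  rcases eq_or_ne D ∞ with hD | hD
  · simp [D, hD]
  calc volume {u ∈ Ioi (0 : ℝ) | A < rearr Q₀ g u} ≤ volume (Ioo 0 D.toReal) :=
        measure_mono fun u hu => ⟨hu.1,
          (ENNReal.ofReal_lt_iff_lt_toReal (le_of_lt hu.1) hD).1 (lt_volume_of_lt_rearr hu.2)⟩
    _ = D := by rw [Real.volume_Ioo, sub_zero, ENNReal.ofReal_toReal hD]

lemma setLIntegral_Ioo_rearr_le (hg : AEMeasurable g (volume.restrict Q₀.set))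
    (hI : ∫⁻ x in Q₀.set, g x ≠ ∞) (t : ℝ) (β : ℝ≥0∞) :
    ∫⁻ u in Ioo 0 t, rearr Q₀ g u ≤ (∫⁻ x in Q₀.set, (g x - β)) + β * ENNReal.ofReal t := by
  have hcompare (l : ℝ) (_ : 0 < l) :
      volume.restrict (Ioo 0 t) {u | ENNReal.ofReal l < rearr Q₀ g u - β} ≤
        volume.restrict Q₀.set {x | ENNReal.ofReal l < g x - β} := by
    rw [Measure.restrict_apply' measurableSet_Ioo, Measure.restrict_apply' Q₀.measurableSet_set]
    calc volume ({u | ENNReal.ofReal l < rearr Q₀ g u - β} ∩ Ioo 0 t)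
        ≤ volume {u ∈ Ioi (0 : ℝ) | β + ENNReal.ofReal l < rearr Q₀ g u} :=
          measure_mono fun u hu => ⟨hu.2.1, lt_tsub_iff_left.1 hu.1⟩
      _ ≤ volume {x ∈ Q₀.set | β + ENNReal.ofReal l < g x} := volume_lt_rearr_le_volume_lt _
      _ ≤ volume ({x | ENNReal.ofReal l < g x - β} ∩ Q₀.set) :=
          measure_mono fun x hx => ⟨lt_tsub_iff_left.2 hx.2, hx.1⟩
  calc ∫⁻ u in Ioo 0 t, rearr Q₀ g u ≤ ∫⁻ u in Ioo 0 t, (rearr Q₀ g u - β + β) :=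
        lintegral_mono fun u => le_tsub_add
    _ = (∫⁻ u in Ioo 0 t, (rearr Q₀ g u - β)) + β * ENNReal.ofReal t := by
        rw [lintegral_add_right _ measurable_const, setLIntegral_const, Real.volume_Ioo, sub_zero]
    _ ≤ (∫⁻ x in Q₀.set, (g x - β)) + β * ENNReal.ofReal t := by
        have hanti : Antitone fun u => rearr Q₀ g u - β :=
          fun u v huv => tsub_le_tsub_right (rearr_antitone Q₀ g huv) β
        gcongr ?_ + _
        refine lintegral_le_lintegral_of_meas_lt_le hanti.measurable.aemeasurable
          (hg.sub aemeasurable_const) ?_ ?_ hcompare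
        · filter_upwards [ae_restrict_mem measurableSet_Ioo] with u hu
          exact ne_top_of_le_ne_top (rearr_lt_top hg hI hu.1).ne tsub_le_self
        · filter_upwards [ae_lt_top' hg hI] with x hx
          exact ne_top_of_le_ne_top hx.ne tsub_le_self

lemma exists_measurableSet_forall_le_rearr (Q₀ : Cube n) (g₁ g₂ : (Fin n → ℝ) → ℝ≥0∞) (t : ℝ) :
    ∃ G, MeasurableSet G ∧ G ⊆ Q₀.set ∧ volume G ≤ 2 * ENNReal.ofReal t ∧
      ∀ x ∈ Q₀.set \ G, g₁ x ≤ rearr Q₀ g₁ t ∧ g₂ x ≤ rearr Q₀ g₂ t := by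
  set E := {x ∈ Q₀.set | rearr Q₀ g₁ t < g₁ x} ∪ {x ∈ Q₀.set | rearr Q₀ g₂ t < g₂ x}
  refine ⟨toMeasurable volume E ∩ Q₀.set,
    (measurableSet_toMeasurable _ _).inter Q₀.measurableSet_set, inter_subset_right, ?_, ?_⟩
  · calc volume (toMeasurable volume E ∩ Q₀.set) ≤ volume E :=
          (measure_mono inter_subset_left).trans (measure_toMeasurable E).le
      _ ≤ ENNReal.ofReal t + ENNReal.ofReal t := (measure_union_le _ _).trans
          (add_le_add (volume_rearr_lt_le Q₀ g₁ t) (volume_rearr_lt_le Q₀ g₂ t))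
      _ = 2 * ENNReal.ofReal t := (two_mul _).symm
  · rintro x ⟨hxQ, hxG⟩
    have hxE : x ∉ E := fun h => hxG ⟨subset_toMeasurable _ _ h, hxQ⟩
    simp only [E, mem_union, mem_ofPred_eq, not_or, not_and, not_lt] at hxE
    exact ⟨hxE.1 hxQ, hxE.2 hxQ⟩

end Rearrangement

/-- Bennett–Sharpley inequality. There is `c > 0` depending only
on `n` such that for all `f ∈ L¹(Q₀)` and `0 < t < 1/6`:
`f**(t) - f*(t) ≤ c (f^#_{Q₀})*(t)`. -/
theorem garsia_rodemich_stmt11 (n : ℕ) :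
    ∃ c : ℝ≥0∞, 0 < c ∧ c ≠ ⊤ ∧
      ∀ Q₀ : Cube n, volume Q₀.set = 1 →
        ∀ f : (Fin n → ℝ) → ℝ, IntegrableOn f Q₀.set volume →
          ∀ t ∈ Set.Ioo (0:ℝ) (1 / 6),
            (∫⁻ u in Set.Ioo (0:ℝ) t, rearrF Q₀ f u) / ENNReal.ofReal t - rearrF Q₀ f t ≤
              c * rearr Q₀ (sharpMax Q₀ f) t := by
  refine ⟨(2 ^ n + 2) * 4, by positivity, by finiteness, ?_⟩
  rintro Q₀ hQ₀ f hf t ⟨-, ht⟩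
  have hg : AEMeasurable (fun x => ENNReal.ofReal |f x|) (volume.restrict Q₀.set) :=
    ENNReal.measurable_ofReal.comp_aemeasurable hf.1.aemeasurable.abs
  have hI : ∫⁻ x in Q₀.set, ENNReal.ofReal |f x| ≠ ∞ := by
    simpa only [Real.enorm_eq_ofReal_abs] using hf.2.ne
  obtain ⟨G, hG, hGQ, hGvol, hgood⟩ :=
    exists_measurableSet_forall_le_rearr Q₀ (fun x => ENNReal.ofReal |f x|) (sharpMax Q₀ f) t
  have hG2 : 2 * volume G ≤ volume Q₀.set :=
    calc 2 * volume G ≤ 2 * (2 * ENNReal.ofReal t) := by gcongr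
      _ = ENNReal.ofReal (4 * t) := by
          rw [← mul_assoc, ENNReal.ofReal_mul (by norm_num)]; norm_num
      _ ≤ volume Q₀.set := hQ₀ ▸ ENNReal.ofReal_le_one.2 (by linarith)
  have hCZ := setLIntegral_sub_le_of_sharpMax_le hG hGQ hG2 hgood
  rw [tsub_le_iff_right]
  refine ENNReal.div_le_of_le_mul ((setLIntegral_Ioo_rearr_le hg hI t (rearrF Q₀ f t)).trans ?_)
  calc (∫⁻ x in Q₀.set, (ENNReal.ofReal |f x| - rearrF Q₀ f t)) + rearrF Q₀ f t * ENNReal.ofReal t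
      ≤ (2 ^ n + 2) * rearr Q₀ (sharpMax Q₀ f) t * (2 * (2 * ENNReal.ofReal t)) +
          rearrF Q₀ f t * ENNReal.ofReal t := by gcongr; exact hCZ.trans (by gcongr)
    _ = _ := by ring

end
end

section
/- Let n ∈ ℕ and λ ∈ (−n, 0). Then GaRo_{∞,λ}(Q₀) = 𝓛̇^{1,λ}(Q₀) with equivalent norms: there exist constants c₁, c₂ > 0 (depending only on n) such that c₁ ‖f‖_{𝓛̇^{1,λ}} ≤ ‖f‖_{GaRo_{∞,λ}} ≤ c₂ ‖f‖_{𝓛̇^{1,λ}} for all f ∈ L¹(Q₀). Moreover, for λ = 0 one has GaRo_{∞,0}(Q₀) = BMO(Q₀) with equivalent (semi)norms. -/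
open MeasureTheory ENNReal NNReal Set Filter

noncomputable section

variable {n : ℕ}

/-!
Both norms compare the same cube-wise quantities. For a cube `Q`, averaging
`|f x - f y|` in `y` gives `|Q| ⨍_Q |f - f_Q| ≤ (1/|Q|) ∫_Q ∫_Q |f x - f y|`, while the triangle
inequality through `f_Q` gives `(1/|Q|) ∫_Q ∫_Q |f x - f y| ≤ 2 |Q| ⨍_Q |f - f_Q|`. Since
`|Q| = |Q|^{1+λ/n} |Q|^{-λ/n}`, the packing sum of double oscillations is at most
`2 ‖f‖_{𝓛̇^{1,λ}} Σ |Qᵢ|^{1+λ/n}`, and testing the `GaRo_{∞,λ}` inequality on the one-cube packing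
`{Q}` gives `|Q|^{-λ/n} ⨍_Q |f - f_Q| ≤ ‖f‖_{GaRo_{∞,λ}}`. For `λ = 0` the Campanato seminorm is
the `BMO` seminorm.
-/

namespace Cube

lemma vol_pos (Q : Cube n) : 0 < Q.vol := by
  rw [vol, set, Real.volume_Icc_pi, CanonicallyOrderedAdd.prod_pos]
  intro i _
  simp [Q.side_pos]

lemma vol_ne_top (Q : Cube n) : Q.vol ≠ ⊤ := by
  rw [vol, set, Real.volume_Icc_pi]
  exact (ENNReal.prod_lt_top fun _ _ => ofReal_lt_top).ne

lemma vol_rpow_neg_mul_vol_rpow_one_add (Q : Cube n) (t : ℝ) :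
    Q.vol ^ (-t) * Q.vol ^ (1 + t) = Q.vol := by
  rw [← ENNReal.rpow_add _ _ Q.vol_pos.ne' Q.vol_ne_top]
  simp

instance isFiniteMeasure_restrict_set (Q : Cube n) : IsFiniteMeasure (volume.restrict Q.set) :=
  isFiniteMeasure_restrict.mpr Q.vol_ne_top

end Cube

section Oscillation

variable {α : Type*} [MeasurableSpace α] (μ : Measure α) [IsFiniteMeasure μ]

lemma measure_univ_mul_enorm_sub_average_le {f : α → ℝ} (hf : Integrable f μ) (c : ℝ) :
    μ univ * ‖c - ⨍ y, f y ∂μ‖ₑ ≤ ∫⁻ y, ‖c - f y‖ₑ ∂μ :=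
  calc μ univ * ‖c - ⨍ y, f y ∂μ‖ₑ = ‖μ.real univ • (c - ⨍ y, f y ∂μ)‖ₑ := by
        rw [enorm_smul, Real.enorm_of_nonneg measureReal_nonneg,
          ofReal_measureReal (measure_ne_top μ univ)]
    _ = ‖∫ y, (c - f y) ∂μ‖ₑ := by
        rw [smul_sub, measure_smul_average, integral_sub (integrable_const c) hf, integral_const]
    _ ≤ ∫⁻ y, ‖c - f y‖ₑ ∂μ := enorm_integral_le_lintegral_enorm _

lemma lintegral_lintegral_enorm_sub_le (f : α → ℝ) (c : ℝ) :
    ∫⁻ x, ∫⁻ y, ‖f x - f y‖ₑ ∂μ ∂μ ≤ 2 * μ univ * ∫⁻ x, ‖f x - c‖ₑ ∂μ := by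
  set I := ∫⁻ x, ‖f x - c‖ₑ ∂μ
  calc ∫⁻ x, ∫⁻ y, ‖f x - f y‖ₑ ∂μ ∂μ
      ≤ ∫⁻ x, ∫⁻ y, (‖f x - c‖ₑ + ‖f y - c‖ₑ) ∂μ ∂μ := by
        refine lintegral_mono fun x => lintegral_mono fun y => ?_
        rw [← sub_sub_sub_cancel_right (f x) (f y) c]
        exact enorm_sub_le
    _ = ∫⁻ x, (‖f x - c‖ₑ * μ univ + I) ∂μ := by
        simp only [lintegral_add_left measurable_const, lintegral_const]
        rfl
    _ = I * μ univ + I * μ univ := by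
        rw [lintegral_add_right _ measurable_const, lintegral_mul_const' _ _ (measure_ne_top μ univ),
          lintegral_const]
    _ = 2 * μ univ * I := by ring

end Oscillation

lemma cubeAvg_eq_setAverage (f : (Fin n → ℝ) → ℝ) (Q : Cube n) :
    cubeAvg f Q = ⨍ x in Q.set, f x := by
  rw [cubeAvg, setAverage_eq, smul_eq_mul, measureReal_def, inv_mul_eq_div]

lemma oscAvg_le_dblOsc_div_vol {f : (Fin n → ℝ) → ℝ} {Q : Cube n}
    (hf : IntegrableOn f Q.set volume) : oscAvg f Q ≤ dblOsc f Q / Q.vol := by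
  refine ENNReal.div_le_div_right ?_ _
  rw [dblOsc, ENNReal.le_div_iff_mul_le (Or.inl Q.vol_pos.ne') (Or.inl Q.vol_ne_top), mul_comm,
    ← lintegral_const_mul' _ _ Q.vol_ne_top]
  refine lintegral_mono fun x => ?_
  have h := measure_univ_mul_enorm_sub_average_le (volume.restrict Q.set) hf (f x)
  simp only [Measure.restrict_apply_univ, ← cubeAvg_eq_setAverage, Real.enorm_eq_ofReal_abs] at h
  exact h

lemma dblOsc_le_two_mul_vol_mul_oscAvg (f : (Fin n → ℝ) → ℝ) (Q : Cube n) :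
    dblOsc f Q ≤ 2 * Q.vol * oscAvg f Q := by
  have h := lintegral_lintegral_enorm_sub_le (volume.restrict Q.set) f (cubeAvg f Q)
  simp only [Measure.restrict_apply_univ, Real.enorm_eq_ofReal_abs] at h
  rw [dblOsc, oscAvg, mul_assoc, ENNReal.mul_div_cancel Q.vol_pos.ne' Q.vol_ne_top]
  exact ENNReal.div_le_of_le_mul (by rwa [mul_right_comm])

lemma isPacking_singleton {Q₀ Q : Cube n} (hQ : Q.set ⊆ Q₀.set) : IsPacking Q₀ {Q} :=
  ⟨countable_singleton Q, fun _ h => h ▸ hQ, pairwise_singleton _ _⟩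

lemma campNorm_le_gaRoLamNorm {Q₀ : Cube n} {f : (Fin n → ℝ) → ℝ}
    (hf : IntegrableOn f Q₀.set volume) (lam : ℝ) :
    campNorm Q₀ lam f ≤ GaRoLamNorm Q₀ lam f := by
  refine le_sInf fun C hC => iSup₂_le fun Q hQ => ?_
  set t := lam / (n : ℝ)
  have hpack : dblOsc f Q ≤ C * Q.vol ^ (1 + t) := by
    have h := hC {Q} (isPacking_singleton hQ)
    rwa [tsum_singleton Q (dblOsc f), tsum_singleton Q fun Q : Cube n => Q.vol ^ (1 + t)] at h
  calc Q.vol ^ (-t) * oscAvg f Q ≤ Q.vol ^ (-t) * (C * Q.vol ^ (1 + t) / Q.vol) := by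
        gcongr
        exact (oscAvg_le_dblOsc_div_vol (hf.mono_set hQ)).trans (by gcongr)
    _ = C * (Q.vol ^ (-t) * Q.vol ^ (1 + t)) * Q.vol⁻¹ := by rw [div_eq_mul_inv]; ring
    _ = C := by
        rw [Q.vol_rpow_neg_mul_vol_rpow_one_add, mul_assoc,
          ENNReal.mul_inv_cancel Q.vol_pos.ne' Q.vol_ne_top, mul_one]

lemma gaRoLamNorm_le_two_mul_campNorm (Q₀ : Cube n) (f : (Fin n → ℝ) → ℝ) (lam : ℝ) :
    GaRoLamNorm Q₀ lam f ≤ 2 * campNorm Q₀ lam f := by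
  refine sInf_le fun π hπ => ?_
  rw [← ENNReal.tsum_mul_left]
  refine ENNReal.tsum_le_tsum fun ⟨Q, hQπ⟩ => ?_
  set t := lam / (n : ℝ)
  have hcamp : Q.vol ^ (-t) * oscAvg f Q ≤ campNorm Q₀ lam f :=
    le_iSup₂ (f := fun (Q : Cube n) (_ : Q ∈ {Q : Cube n | Q.set ⊆ Q₀.set}) =>
      Q.vol ^ (-t) * oscAvg f Q) Q (hπ.2.1 Q hQπ)
  calc dblOsc f Q ≤ 2 * Q.vol * oscAvg f Q := dblOsc_le_two_mul_vol_mul_oscAvg f Q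
    _ = 2 * (Q.vol ^ (-t) * Q.vol ^ (1 + t)) * oscAvg f Q := by
        rw [Q.vol_rpow_neg_mul_vol_rpow_one_add]
    _ = 2 * Q.vol ^ (1 + t) * (Q.vol ^ (-t) * oscAvg f Q) := by ring
    _ ≤ 2 * Q.vol ^ (1 + t) * campNorm Q₀ lam f := by gcongr
    _ = 2 * campNorm Q₀ lam f * Q.vol ^ (1 + t) := by ring

lemma campNorm_zero (Q₀ : Cube n) (f : (Fin n → ℝ) → ℝ) :
    campNorm Q₀ 0 f = bmoNormE Q₀ f := by
  simp [campNorm, bmoNormE]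

theorem garsia_rodemich_stmt18_general (n : ℕ) :
    ∃ c₁ c₂ : ℝ≥0∞, 0 < c₁ ∧ c₂ ≠ ⊤ ∧
      ∀ Q₀ : Cube n, volume Q₀.set = 1 →
        ∀ f : (Fin n → ℝ) → ℝ, IntegrableOn f Q₀.set volume →
          (∀ lam ∈ Set.Ioo (-(n : ℝ)) 0,
            c₁ * campNorm Q₀ lam f ≤ GaRoLamNorm Q₀ lam f ∧
              GaRoLamNorm Q₀ lam f ≤ c₂ * campNorm Q₀ lam f) ∧
          (c₁ * bmoNormE Q₀ f ≤ GaRoLamNorm Q₀ 0 f ∧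
            GaRoLamNorm Q₀ 0 f ≤ c₂ * bmoNormE Q₀ f) := by
  refine ⟨1, 2, one_pos, ofNat_ne_top, fun Q₀ _ f hf => ?_⟩
  simp only [one_mul, ← campNorm_zero Q₀ f]
  exact ⟨fun lam _ => ⟨campNorm_le_gaRoLamNorm hf lam, gaRoLamNorm_le_two_mul_campNorm Q₀ f lam⟩,
    campNorm_le_gaRoLamNorm hf 0, gaRoLamNorm_le_two_mul_campNorm Q₀ f 0⟩

/-- Theorem: `GaRo_{∞,λ}` and Campanato spaces.
For `λ ∈ (-n, 0)`, `GaRo_{∞,λ}(Q₀) = 𝓛̇^{1,λ}(Q₀)` with equivalent norms (constants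
depending only on `n`), and for `λ = 0`, `GaRo_{∞,0}(Q₀) = BMO(Q₀)` with equivalent
seminorms. -/
theorem garsia_rodemich_stmt18 (n : ℕ) (hn : 0 < n) :
    ∃ c₁ c₂ : ℝ≥0∞, 0 < c₁ ∧ c₂ ≠ ⊤ ∧
      ∀ Q₀ : Cube n, volume Q₀.set = 1 →
        ∀ f : (Fin n → ℝ) → ℝ, IntegrableOn f Q₀.set volume →
          (∀ lam ∈ Set.Ioo (-(n : ℝ)) 0,
            c₁ * campNorm Q₀ lam f ≤ GaRoLamNorm Q₀ lam f ∧
              GaRoLamNorm Q₀ lam f ≤ c₂ * campNorm Q₀ lam f) ∧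
          (c₁ * bmoNormE Q₀ f ≤ GaRoLamNorm Q₀ 0 f ∧
            GaRoLamNorm Q₀ 0 f ≤ c₂ * bmoNormE Q₀ f) :=
  garsia_rodemich_stmt18_general n

end
end
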